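/- Set ε = √(3/8) and let (α,β) ∈ ℝ² with (α,β) ≠ (0,0). Critical points of the zero set of ψ_{α,β} on the boundary of the rectangle (−πε/2, πε/2) × (−π/2, π/2) can occur only at the midpoints (±πε/2, 0) of the vertical sides and only when α ± 2β = 0. Precisely: (i) if y ∈ (−π/2, π/2) and ψ_{α,β}(πε/2, y) = 0 and ∂_yψ_{α,β}(πε/2, y) = 0, then y = 0 and α + 2β = 0; (ii) if y ∈ (−π/2, π/2) and ψ_{α,β}(−πε/2, y) = 0 and ∂_yψ_{α,β}(−πε/2, y) = 0, then y = 0 and α − 2β = 0; (iii) there is no x ∈ (−πε/2, πε/2) with ψ_{α,β}(x, ±π/2) = 0 and ∂_xψ_{α,β}(x, ±π/2) = 0. -/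

import Mathlib

/-!
On a vertical side `sin (x/ε) = ±1`, so `ψ` cannot vanish there when `α = 0`; hence `α ≠ 0`,
and `∂_y ψ = -8α sin y cos y` with `cos y > 0` forces `y = 0`, where `ψ = α ± 2β`.
On a horizontal side `ψ = -3α + 2β sin (x/ε)` and `∂_x ψ = 2β cos (x/ε)/ε` with `cos (x/ε) > 0`,
so a critical zero would force `β = 0` and then `α = 0`.
-/

open Real

noncomputable section

/-- The critical aspect ratio `ε = √(3/8)`. -/
def epsc : ℝ := Real.sqrt (3 / 8)

/-- The function `ψ_{α,β}(x,y) = α(1 − 4 sin²y) + 2β sin(x/ε)` with `ε = √(3/8)`,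
whose zero set coincides inside the rectangle with the zero set of `φ_{α,β}`. -/
def psiAB (α β x y : ℝ) : ℝ :=
  α * (1 - 4 * Real.sin y ^ 2) + 2 * β * Real.sin (x / epsc)

open Set

lemma epsc_pos : 0 < epsc := Real.sqrt_pos.mpr (by norm_num)

lemma deriv_psiAB_snd (α β x y : ℝ) :
    deriv (psiAB α β x) y = -(8 * α * sin y * cos y) := by
  have h := ((((hasDerivAt_sin y).pow 2).const_mul 4).const_sub 1).const_mul α
    |>.add_const (2 * β * sin (x / epsc))
  exact (h.congr_deriv (by ring)).deriv

lemma deriv_psiAB_fst (α β y x : ℝ) :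
    deriv (fun t => psiAB α β t y) x = 2 * β * cos (x / epsc) / epsc := by
  have h := (((hasDerivAt_id x).div_const epsc).sin.const_mul (2 * β)).const_add
    (α * (1 - 4 * sin y ^ 2))
  exact (h.congr_deriv (by simp only [id]; ring)).deriv

lemma div_epsc_mem_Ioo {x : ℝ} (hx : x ∈ Ioo (-(π * epsc / 2)) (π * epsc / 2)) :
    x / epsc ∈ Ioo (-(π / 2)) (π / 2) := by
  constructor
  · rw [lt_div_iff₀ epsc_pos]; linarith [hx.1]
  · rw [div_lt_iff₀ epsc_pos]; linarith [hx.2]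

theorem eq_zero_of_psiAB_eq_zero_of_deriv_snd_eq_zero {α β x y : ℝ} (hαβ : (α, β) ≠ (0, 0))
    (hx : sin (x / epsc) ≠ 0) (hy : y ∈ Ioo (-(π / 2)) (π / 2))
    (h₀ : psiAB α β x y = 0) (h₁ : deriv (psiAB α β x) y = 0) :
    y = 0 ∧ α + 2 * β * sin (x / epsc) = 0 := by
  unfold psiAB at h₀
  rw [deriv_psiAB_snd] at h₁
  have hα : α ≠ 0 := by
    rintro rfl
    have hβ : β = 0 := by simpa [hx] using h₀
    exact hαβ (by simp [hβ])
  have hsin : sin y = 0 := by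
    have hcos := (cos_pos_of_mem_Ioo hy).ne'
    simpa [hα, hcos] using h₁
  have hy₀ : y = 0 :=
    (sin_eq_zero_iff_of_lt_of_lt (by linarith [hy.1, pi_pos]) (by linarith [hy.2, pi_pos])).mp hsin
  refine ⟨hy₀, ?_⟩
  simpa [hy₀] using h₀

theorem not_exists_psiAB_eq_zero_and_deriv_fst_eq_zero {α β y : ℝ} (hαβ : (α, β) ≠ (0, 0))
    (hy : 1 - 4 * sin y ^ 2 ≠ 0) :
    ¬ ∃ x ∈ Ioo (-(π * epsc / 2)) (π * epsc / 2),
      psiAB α β x y = 0 ∧ deriv (fun t => psiAB α β t y) x = 0 := by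
  rintro ⟨x, hx, h₀, h₁⟩
  rw [deriv_psiAB_fst] at h₁
  have hβ : β = 0 := by
    have hcos := (cos_pos_of_mem_Ioo (div_epsc_mem_Ioo hx)).ne'
    simpa [hcos, epsc_pos.ne'] using h₁
  have hα : α = 0 := by simpa [psiAB, hβ, hy] using h₀
  exact hαβ (by simp [hα, hβ])

/-- For `ε = √(3/8)` and `(α,β) ≠ (0,0)`, critical points of the zero
set of `ψ_{α,β}` on the boundary of the rectangle `(−πε/2, πε/2) × (−π/2, π/2)` can
occur only at the midpoints `(±πε/2, 0)` of the vertical sides, and only when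
`α ± 2β = 0`: (i) on the right side, a boundary critical point forces `y = 0` and
`α + 2β = 0`; (ii) on the left side, it forces `y = 0` and `α − 2β = 0`; (iii) there
is no boundary critical point on the horizontal sides `y = ±π/2`. -/
theorem boundary_critical_points (α β : ℝ) (hαβ : (α, β) ≠ (0, 0)) :
    (∀ y ∈ Set.Ioo (-(π / 2)) (π / 2),
        psiAB α β (π * epsc / 2) y = 0 →
        deriv (fun t => psiAB α β (π * epsc / 2) t) y = 0 →
        y = 0 ∧ α + 2 * β = 0)
    ∧ (∀ y ∈ Set.Ioo (-(π / 2)) (π / 2),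
        psiAB α β (-(π * epsc / 2)) y = 0 →
        deriv (fun t => psiAB α β (-(π * epsc / 2)) t) y = 0 →
        y = 0 ∧ α - 2 * β = 0)
    ∧ (¬ ∃ x ∈ Set.Ioo (-(π * epsc / 2)) (π * epsc / 2),
        psiAB α β x (π / 2) = 0 ∧ deriv (fun t => psiAB α β t (π / 2)) x = 0)
    ∧ (¬ ∃ x ∈ Set.Ioo (-(π * epsc / 2)) (π * epsc / 2),
        psiAB α β x (-(π / 2)) = 0 ∧ deriv (fun t => psiAB α β t (-(π / 2))) x = 0) := by
  have hright : sin (π * epsc / 2 / epsc) = 1 := by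
    rw [div_right_comm, mul_div_cancel_right₀ _ epsc_pos.ne', sin_pi_div_two]
  have hleft : sin (-(π * epsc / 2) / epsc) = -1 := by rw [neg_div, sin_neg, hright]
  refine ⟨fun y hy h₀ h₁ => ?_, fun y hy h₀ h₁ => ?_,
    not_exists_psiAB_eq_zero_and_deriv_fst_eq_zero hαβ (by norm_num),
    not_exists_psiAB_eq_zero_and_deriv_fst_eq_zero hαβ (by norm_num)⟩
  · simpa [hright] using
      eq_zero_of_psiAB_eq_zero_of_deriv_snd_eq_zero hαβ (by simp [hright]) hy h₀ h₁
  · simpa [hleft, sub_eq_add_neg] using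
      eq_zero_of_psiAB_eq_zero_of_deriv_snd_eq_zero hαβ (by simp [hleft]) hy h₀ h₁

end
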